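/- (Al-Salam–Verma q-integral, equivalent to Sears's identity.) Let 0<q<1 and let a,b,c,u,v be complex numbers with u,v ≠ 0, max{|au|,|av|,|bu|,|bv|,|cu|,|cv|}<1, and such that there are no zero factors in any denominator below. Then ∫_u^v (qx/u;q)_∞ (qx/v;q)_∞ (abcuvx;q)_∞ / ((ax;q)_∞ (bx;q)_∞ (cx;q)_∞) d_q x = (1−q)·v·(q;q)_∞ (u/v;q)_∞ (qv/u;q)_∞ (abuv;q)_∞ (acuv;q)_∞ (bcuv;q)_∞ / ((au;q)_∞ (bu;q)_∞ (cu;q)_∞ (av;q)_∞ (bv;q)_∞ (cv;q)_∞). -/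

import Mathlib

open Filter Topology

noncomputable def qPoch (a q : ℂ) (n : ℕ) : ℂ :=
  ∏ j ∈ Finset.range n, (1 - a * q ^ j)

noncomputable def qPochInf (a q : ℂ) : ℂ :=
  ∏' j : ℕ, (1 - a * q ^ j)

/-- The Jackson `q`-integral `∫_a^b f(x) d_q x`. -/
noncomputable def jacksonIntegral (q : ℝ) (a b : ℂ) (f : ℂ → ℂ) : ℂ :=
  (1 - (q : ℂ)) * ∑' n : ℕ, (b * f (b * (q : ℂ) ^ n) - a * f (a * (q : ℂ) ^ n)) * (q : ℂ) ^ n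

namespace AV

variable {Q : ℂ}

lemma summable_geom_mul (hQ : ‖Q‖ < 1) (C : ℝ) :
    Summable (fun n : ℕ => C * ‖Q‖ ^ n) :=
  (summable_geometric_of_lt_one (norm_nonneg Q) hQ).mul_left C

lemma summable_of_norm_le_geom (hQ : ‖Q‖ < 1) {g : ℕ → ℂ} {C : ℝ}
    (h : ∀ n, ‖g n‖ ≤ C * ‖Q‖ ^ n) : Summable g :=
  Summable.of_norm_bounded (summable_geom_mul hQ C) h

lemma multipliable (hQ : ‖Q‖ < 1) (z : ℂ) :
    Multipliable (fun j : ℕ => 1 - z * Q ^ j) := by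
  by_cases hz : ∃ j, 1 - z * Q ^ j = 0
  · obtain ⟨j, hj⟩ := hz
    refine ⟨0, ?_⟩
    rw [HasProd]
    have : ∀ s : Finset ℕ, {j} ≤ s → (∏ i ∈ s, (1 - z * Q ^ i)) = 0 := by
      intro s hs
      exact Finset.prod_eq_zero (hs (Finset.mem_singleton_self j)) hj
    refine tendsto_atTop_of_eventually_const (i₀ := ({j} : Finset ℕ)) this |>.congr' ?_
    exact EventuallyEq.rfl
  · push_neg at hz
    -- use log criterion on a tail
    obtain ⟨N, hN⟩ : ∃ N : ℕ, ‖z‖ * ‖Q‖ ^ N ≤ 1/2 := by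
      obtain ⟨N, hN⟩ := exists_pow_lt_of_lt_one
        (show (0:ℝ) < (1/2)/(‖z‖+1) by positivity) hQ
      refine ⟨N, ?_⟩
      have h1 : ‖z‖ * ‖Q‖ ^ N ≤ ‖z‖ * ((1/2)/(‖z‖+1)) :=
        mul_le_mul_of_nonneg_left hN.le (norm_nonneg z)
      have hzp : (0:ℝ) < ‖z‖ + 1 := by positivity
      have h2 : ‖z‖ * ((1/2)/(‖z‖+1)) ≤ 1/2 := by
        rw [mul_comm, div_mul_eq_mul_div, div_le_iff₀ hzp]
        nlinarith [norm_nonneg z]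
      linarith
    have htail : ∀ (M : ℕ) (w : ℂ), (fun n : ℕ => 1 - w * Q ^ (n + M))
        = (fun n : ℕ => 1 - (w * Q ^ M) * Q ^ n) := by
      intro M w
      funext n
      rw [pow_add]
      ring
    have key : ∀ j : ℕ, ‖z * Q ^ (j + N)‖ ≤ 1/2 := by
      intro j
      rw [norm_mul, norm_pow, pow_add]
      have hj : ‖Q‖ ^ j ≤ 1 := pow_le_one₀ (norm_nonneg Q) hQ.le
      nlinarith [mul_nonneg (norm_nonneg z) (pow_nonneg (norm_nonneg Q) N),
        pow_nonneg (norm_nonneg Q) j, norm_nonneg z, pow_nonneg (norm_nonneg Q) N]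
    have hfn : ∀ j : ℕ, (1 : ℂ) - z * Q ^ (j + N) ≠ 0 := fun j => hz _
    have hlog : Summable (fun j : ℕ => Complex.log (1 - z * Q ^ (j + N))) := by
      apply summable_of_norm_le_geom hQ (C := 3/2 * (‖z‖ * ‖Q‖ ^ N))
      intro n
      have h1 : (1 : ℂ) - z * Q ^ (n + N) = 1 + (- (z * Q ^ (n + N))) := by ring
      rw [h1]
      refine le_trans (Complex.norm_log_one_add_half_le_self (by
        rw [norm_neg]; exact key n)) ?_
      rw [norm_neg, norm_mul, norm_pow, pow_add]
      ring_nf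
      nlinarith [norm_nonneg z, pow_nonneg (norm_nonneg Q) n, pow_nonneg (norm_nonneg Q) N,
        norm_nonneg Q]
    have hmt : Multipliable (fun j : ℕ => 1 - z * Q ^ (j + N)) :=
      Complex.multipliable_of_summable_log hlog
    exact ⟨_, HasProd.prod_range_mul (f := fun j : ℕ => 1 - z * Q ^ j) (k := N)
      hmt.hasProd⟩


lemma tail_fun (w : ℂ) (M : ℕ) :
    (fun n : ℕ => 1 - w * Q ^ (n + M)) = (fun n : ℕ => 1 - (w * Q ^ M) * Q ^ n) := by
  funext n
  rw [pow_add]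
  ring

lemma split (hQ : ‖Q‖ < 1) (z : ℂ) (N : ℕ) :
    qPochInf z Q = qPoch z Q N * qPochInf (z * Q ^ N) Q := by
  have hmt : Multipliable (fun n : ℕ => 1 - z * Q ^ (n + N)) := by
    rw [tail_fun]
    exact multipliable hQ _
  have h := Multipliable.prod_mul_tprod_nat_mul' (f := fun j : ℕ => 1 - z * Q ^ j) (k := N) hmt
  rw [qPochInf, qPoch, ← h, tail_fun]
  rfl

lemma peel (hQ : ‖Q‖ < 1) (z : ℂ) :
    qPochInf z Q = (1 - z) * qPochInf (z * Q) Q := by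
  have := split hQ z 1
  rw [this, qPoch]
  simp

lemma eq_zero (hQ : ‖Q‖ < 1) {z : ℂ} {j : ℕ} (h : z * Q ^ j = 1) : qPochInf z Q = 0 := by
  have hj : (1 : ℂ) - z * Q ^ j = 0 := by rw [h]; ring
  have : HasProd (fun i : ℕ => 1 - z * Q ^ i) 0 := by
    rw [HasProd]
    have hev : ∀ s : Finset ℕ, {j} ≤ s → (∏ i ∈ s, (1 - z * Q ^ i)) = 0 := fun s hs =>
      Finset.prod_eq_zero (hs (Finset.mem_singleton_self j)) hj
    exact tendsto_atTop_of_eventually_const (i₀ := ({j} : Finset ℕ)) hev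
  exact this.tprod_eq

lemma factor_ne_one (hQ : ‖Q‖ < 1) {z : ℂ} (h : qPochInf z Q ≠ 0) (j : ℕ) : z * Q ^ j ≠ 1 :=
  fun hj => h (eq_zero hQ hj)

lemma finset_prod_one_add_sub_one_le (g : ℕ → ℂ) (s : Finset ℕ) :
    ‖(∏ i ∈ s, (1 + g i)) - 1‖ ≤ (∏ i ∈ s, (1 + ‖g i‖)) - 1 := by
  classical
  induction s using Finset.cons_induction with
  | empty => simp
  | cons a s ha ih =>
    rw [Finset.prod_cons, Finset.prod_cons]
    have hR : (1:ℝ) ≤ ∏ i ∈ s, (1 + ‖g i‖) := by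
      have : (∏ _i ∈ s, (1:ℝ)) ≤ ∏ i ∈ s, (1 + ‖g i‖) :=
        Finset.prod_le_prod (fun i _ => by norm_num)
          (fun i _ => by linarith [norm_nonneg (g i)])
      simpa using this
    have key : (1 + g a) * (∏ i ∈ s, (1 + g i)) - 1
        = (1 + g a) * ((∏ i ∈ s, (1 + g i)) - 1) + g a := by ring
    rw [key]
    calc ‖(1 + g a) * ((∏ i ∈ s, (1 + g i)) - 1) + g a‖
        ≤ ‖(1 + g a)‖ * ‖(∏ i ∈ s, (1 + g i)) - 1‖ + ‖g a‖ := by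
          refine le_trans (norm_add_le _ _) ?_
          rw [norm_mul]
      _ ≤ (1 + ‖g a‖) * ((∏ i ∈ s, (1 + ‖g i‖)) - 1) + ‖g a‖ := by
          have h1 : ‖(1:ℂ) + g a‖ ≤ 1 + ‖g a‖ := by
            refine le_trans (norm_add_le _ _) ?_
            simp
          have h0 : (0:ℝ) ≤ ‖(∏ i ∈ s, (1 + g i)) - 1‖ := norm_nonneg _
          nlinarith [norm_nonneg (g a)]
      _ = (1 + ‖g a‖) * (∏ i ∈ s, (1 + ‖g i‖)) - 1 := by ring

lemma finset_prod_one_add_le_exp (g : ℕ → ℝ) (hg : ∀ i, 0 ≤ g i) (s : Finset ℕ) {S : ℝ}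
    (hS : (∑ i ∈ s, g i) ≤ S) : (∏ i ∈ s, (1 + g i)) ≤ Real.exp S := by
  calc (∏ i ∈ s, (1 + g i)) ≤ ∏ i ∈ s, Real.exp (g i) := by
        refine Finset.prod_le_prod (fun i _ => by nlinarith [hg i]) (fun i _ => ?_)
        have := Real.add_one_le_exp (g i)
        linarith
    _ = Real.exp (∑ i ∈ s, g i) := by rw [Real.exp_sum]
    _ ≤ Real.exp S := Real.exp_le_exp.2 hS

lemma norm_sub_one_le (hQ : ‖Q‖ < 1) (z : ℂ) :
    ‖qPochInf z Q - 1‖ ≤ Real.exp (‖z‖ / (1 - ‖Q‖)) - 1 := by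
  have hs : ∀ s : Finset ℕ, ‖(∏ i ∈ s, (1 - z * Q ^ i)) - 1‖
      ≤ Real.exp (‖z‖ / (1 - ‖Q‖)) - 1 := by
    intro s
    have h1 := finset_prod_one_add_sub_one_le (fun i => -(z * Q ^ i)) s
    simp only [← sub_eq_add_neg, norm_neg] at h1
    refine h1.trans ?_
    have h2 : (∑ i ∈ s, ‖z * Q ^ i‖) ≤ ‖z‖ / (1 - ‖Q‖) := by
      have hsummable : Summable (fun i : ℕ => ‖z‖ * ‖Q‖ ^ i) := summable_geom_mul hQ ‖z‖
      have := Summable.sum_le_tsum s (fun i _ => by positivity) hsummable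
      simp only [norm_mul, norm_pow]
      refine this.trans ?_
      rw [tsum_mul_left, tsum_geometric_of_lt_one (norm_nonneg Q) hQ]
      rw [div_eq_mul_inv]
    have := finset_prod_one_add_le_exp (fun i => ‖z * Q ^ i‖) (fun i => norm_nonneg _) s h2
    linarith
  have hlim : Tendsto (fun s : Finset ℕ => ‖(∏ i ∈ s, (1 - z * Q ^ i)) - 1‖) atTop
      (𝓝 ‖qPochInf z Q - 1‖) := by
    have h := (multipliable hQ z).hasProd
    rw [HasProd] at h
    exact ((h.sub tendsto_const_nhds).norm)
  exact le_of_tendsto hlim (Eventually.of_forall hs)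

lemma norm_le (hQ : ‖Q‖ < 1) (z : ℂ) :
    ‖qPochInf z Q‖ ≤ Real.exp (‖z‖ / (1 - ‖Q‖)) := by
  have h := norm_sub_one_le hQ z
  have := norm_sub_norm_le (qPochInf z Q) 1
  simp only [norm_one] at this
  linarith

lemma exp_half_lt_two : Real.exp (1/2 : ℝ) < 2 := by
  nlinarith [Real.exp_one_lt_d9, Real.exp_pos (1/2 : ℝ),
    Real.exp_add (1/2 : ℝ) (1/2 : ℝ), Real.exp_one_gt_d9]

lemma norm_sub_one_lt_one (hQ : ‖Q‖ < 1) {z : ℂ} (hz : ‖z‖ ≤ (1 - ‖Q‖) / 2) :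
    ‖qPochInf z Q - 1‖ < 1 := by
  have h1 := norm_sub_one_le hQ z
  have hpos : (0:ℝ) < 1 - ‖Q‖ := by linarith
  have h2 : ‖z‖ / (1 - ‖Q‖) ≤ 1/2 := by
    rw [div_le_iff₀ hpos]
    linarith
  have h3 : Real.exp (‖z‖ / (1 - ‖Q‖)) ≤ Real.exp (1/2 : ℝ) := Real.exp_le_exp.2 h2
  have := exp_half_lt_two
  linarith

lemma ne_zero_of_small (hQ : ‖Q‖ < 1) {z : ℂ} (hz : ‖z‖ ≤ (1 - ‖Q‖) / 2) :
    qPochInf z Q ≠ 0 := by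
  have h := norm_sub_one_lt_one hQ hz
  intro h0
  rw [h0] at h
  simp at h

lemma exists_geom_le (hQ : ‖Q‖ < 1) (z : ℂ) {ε : ℝ} (hε : 0 < ε) :
    ∃ N : ℕ, ‖z‖ * ‖Q‖ ^ N ≤ ε := by
  obtain ⟨N, hN⟩ := exists_pow_lt_of_lt_one
    (show (0:ℝ) < ε/(‖z‖+1) by positivity) hQ
  refine ⟨N, ?_⟩
  have h1 : ‖z‖ * ‖Q‖ ^ N ≤ ‖z‖ * (ε/(‖z‖+1)) :=
    mul_le_mul_of_nonneg_left hN.le (norm_nonneg z)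
  have hzp : (0:ℝ) < ‖z‖ + 1 := by positivity
  have h2 : ‖z‖ * (ε/(‖z‖+1)) ≤ ε := by
    rw [mul_comm, div_mul_eq_mul_div, div_le_iff₀ hzp]
    nlinarith [norm_nonneg z]
  linarith

lemma ne_zero (hQ : ‖Q‖ < 1) {z : ℂ} (h : ∀ j : ℕ, z * Q ^ j ≠ 1) :
    qPochInf z Q ≠ 0 := by
  have hpos : (0:ℝ) < (1 - ‖Q‖)/2 := by linarith [norm_nonneg Q]
  obtain ⟨N, hN⟩ := exists_geom_le hQ z hpos
  rw [split hQ z N]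
  refine mul_ne_zero ?_ ?_
  · rw [qPoch]
    refine Finset.prod_ne_zero_iff.2 (fun j _ => ?_)
    intro h0
    exact h j (by linear_combination -h0)
  · refine ne_zero_of_small hQ ?_
    rw [norm_mul, norm_pow]
    exact hN

lemma tendsto_one (hQ : ‖Q‖ < 1) {zs : ℕ → ℂ} (h : Tendsto zs atTop (𝓝 0)) :
    Tendsto (fun n => qPochInf (zs n) Q) atTop (𝓝 1) := by
  rw [tendsto_iff_norm_sub_tendsto_zero]
  have hb : Tendsto (fun n => Real.exp (‖zs n‖ / (1 - ‖Q‖)) - 1) atTop (𝓝 0) := by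
    have h1 : Tendsto (fun n => ‖zs n‖ / (1 - ‖Q‖)) atTop (𝓝 0) := by
      have := h.norm
      simp only [norm_zero] at this
      have := this.div_const (1 - ‖Q‖)
      simpa using this
    have h2 := (Real.continuous_exp.tendsto 0).comp h1
    simp only [Real.exp_zero] at h2
    have := h2.sub_const 1
    simpa using this
  refine squeeze_zero (fun n => norm_nonneg _) (fun n => norm_sub_one_le hQ (zs n)) hb

lemma lower_bound (hQ : ‖Q‖ < 1) {w : ℂ} (h : ∀ j : ℕ, w * Q ^ j ≠ 1) :
    ∃ δ : ℝ, 0 < δ ∧ ∀ n : ℕ, δ ≤ ‖qPochInf (w * Q ^ n) Q‖ := by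
  have hzs : Tendsto (fun n : ℕ => w * Q ^ n) atTop (𝓝 0) := by
    have := tendsto_pow_atTop_nhds_zero_of_norm_lt_one (x := Q) hQ
    have h2 := this.const_mul w
    simpa using h2
  have hner : ∀ n : ℕ, qPochInf (w * Q ^ n) Q ≠ 0 := by
    intro n
    refine ne_zero hQ (fun j hj => h (n + j) ?_)
    rw [pow_add, ← mul_assoc]
    exact hj
  have hlim := tendsto_one hQ hzs
  have hev : ∀ᶠ n in atTop, (1:ℝ)/2 ≤ ‖qPochInf (w * Q ^ n) Q‖ := by
    have : Tendsto (fun n => ‖qPochInf (w * Q ^ n) Q‖) atTop (𝓝 1) := hlim.norm.congr' (by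
      refine Eventually.of_forall (fun n => rfl)) |>.congr (fun n => rfl) |>.mono_right (by
        simp [norm_one])
    exact this.eventually_const_le (by norm_num)
  obtain ⟨N, hN⟩ := hev.exists_forall_of_atTop
  classical
  let δ₀ : ℝ := (Finset.range (N+1)).inf' (by simp) (fun n => ‖qPochInf (w * Q ^ n) Q‖)
  have hδ₀pos : 0 < δ₀ := by
    rw [Finset.lt_inf'_iff]
    intro n _
    exact norm_pos_iff.2 (hner n)
  refine ⟨min δ₀ (1/2), lt_min hδ₀pos (by norm_num), fun n => ?_⟩
  rcases le_or_gt n N with hn | hn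
  · refine le_trans (min_le_left _ _) ?_
    exact Finset.inf'_le _ (by simp [Finset.mem_range]; omega)
  · exact le_trans (min_le_right _ _) (hN n (by omega))

lemma qPochInf_zero : qPochInf 0 Q = 1 := by
  rw [qPochInf]
  simp

lemma telescope {g : ℕ → ℂ} {L : ℂ} (hg : Tendsto g atTop (𝓝 L))
    (hs : Summable (fun n => g n - g (n + 1))) :
    (∑' n : ℕ, (g n - g (n + 1))) = g 0 - L := by
  have hpartial : ∀ N : ℕ, (∑ n ∈ Finset.range N, (g n - g (n + 1))) = g 0 - g N := by
    intro N
    induction N with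
    | zero => simp
    | succ k ih => rw [Finset.sum_range_succ, ih]; ring
  have h1 := hs.hasSum.tendsto_sum_nat
  have h2 : Tendsto (fun N => g 0 - g N) atTop (𝓝 (g 0 - L)) :=
    tendsto_const_nhds.sub hg
  have h3 : Tendsto (fun N => ∑ n ∈ Finset.range N, (g n - g (n + 1))) atTop (𝓝 (g 0 - L)) := by
    refine h2.congr (fun N => (hpartial N).symm)
  exact tendsto_nhds_unique h1 h3


/-! ### Families of nonvanishing factors -/

def Fam (Q w : ℂ) : Prop := ∀ j : ℕ, w * Q ^ j ≠ 1

lemma Fam.of_norm_lt_one (hQ : ‖Q‖ < 1) {w : ℂ} (hw : ‖w‖ < 1) : Fam Q w := by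
  intro j h
  have h1 : ‖w * Q ^ j‖ < 1 := by
    rw [norm_mul, norm_pow]
    calc ‖w‖ * ‖Q‖ ^ j ≤ ‖w‖ * 1 := by
          refine mul_le_mul_of_nonneg_left ?_ (norm_nonneg w)
          exact pow_le_one₀ (norm_nonneg Q) hQ.le
      _ < 1 := by rwa [mul_one]
  rw [h] at h1
  simp at h1

lemma Fam.zero : Fam Q 0 := by
  intro j h
  rw [zero_mul] at h
  exact one_ne_zero h.symm

lemma Fam.shift {w : ℂ} (h : Fam Q w) (k : ℕ) : Fam Q (w * Q ^ k) := by
  intro j hj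
  rw [mul_assoc, ← pow_add] at hj
  exact h (k + j) hj

lemma Fam.one_sub_ne {w : ℂ} (h : Fam Q w) (j : ℕ) : 1 - w * Q ^ j ≠ 0 := by
  intro h0
  exact h j (by linear_combination -h0)

lemma Fam.pochInf_ne (hQ : ‖Q‖ < 1) {w : ℂ} (h : Fam Q w) (n : ℕ) :
    qPochInf (w * Q ^ n) Q ≠ 0 := by
  refine ne_zero hQ (fun j hj => h (n + j) ?_)
  rw [pow_add, ← mul_assoc]
  exact hj

lemma Fam.of_pochInf_ne (hQ : ‖Q‖ < 1) {w : ℂ} (h : qPochInf w Q ≠ 0) : Fam Q w :=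
  factor_ne_one hQ h

lemma norm_P_le (hQ : ‖Q‖ < 1) (w : ℂ) (n : ℕ) :
    ‖qPochInf (w * Q ^ n) Q‖ ≤ Real.exp (‖w‖ / (1 - ‖Q‖)) := by
  refine (norm_le hQ _).trans ?_
  rw [Real.exp_le_exp]
  have hpos : (0:ℝ) < 1 - ‖Q‖ := by linarith [norm_nonneg Q]
  refine div_le_div_of_nonneg_right ?_ hpos.le
  rw [norm_mul, norm_pow]
  calc ‖w‖ * ‖Q‖ ^ n ≤ ‖w‖ * 1 :=
        mul_le_mul_of_nonneg_left (pow_le_one₀ (norm_nonneg Q) hQ.le) (norm_nonneg w)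
    _ = ‖w‖ := mul_one _

/-! ### The integrand and both sides as functions of the three parameters -/

noncomputable def Wc (Q u v α β γ x : ℂ) : ℂ :=
  qPochInf (Q * x / u) Q * qPochInf (Q * x / v) Q * qPochInf (α * β * γ * u * v * x) Q /
    (qPochInf (α * x) Q * qPochInf (β * x) Q * qPochInf (γ * x) Q)

noncomputable def Tc (Q u v α β γ : ℂ) : ℂ :=
  (1 - Q) * ∑' n : ℕ, (v * Wc Q u v α β γ (v * Q ^ n)
    - u * Wc Q u v α β γ (u * Q ^ n)) * Q ^ n

noncomputable def Rc (Q u v α β γ : ℂ) : ℂ :=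
  (1 - Q) * v * (qPochInf Q Q * qPochInf (u / v) Q * qPochInf (Q * v / u) Q *
      qPochInf (α * β * u * v) Q * qPochInf (α * γ * u * v) Q * qPochInf (β * γ * u * v) Q) /
    (qPochInf (α * u) Q * qPochInf (β * u) Q * qPochInf (γ * u) Q *
      qPochInf (α * v) Q * qPochInf (β * v) Q * qPochInf (γ * v) Q)

/-! ### Bounds -/

lemma quot_bound (hQ : ‖Q‖ < 1) (w1 w2 w3 p1 p2 p3 : ℂ)
    (h1 : Fam Q p1) (h2 : Fam Q p2) (h3 : Fam Q p3) :
    ∃ C : ℝ, 0 ≤ C ∧ ∀ n m : ℕ,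
      ‖qPochInf (w1 * Q ^ n) Q * qPochInf (w2 * Q ^ n) Q * qPochInf (w3 * Q ^ m) Q /
        (qPochInf (p1 * Q ^ n) Q * qPochInf (p2 * Q ^ n) Q * qPochInf (p3 * Q ^ m) Q)‖ ≤ C := by
  obtain ⟨δ1, hδ1, hb1⟩ := lower_bound hQ h1
  obtain ⟨δ2, hδ2, hb2⟩ := lower_bound hQ h2
  obtain ⟨δ3, hδ3, hb3⟩ := lower_bound hQ h3
  set E : ℂ → ℝ := fun w => Real.exp (‖w‖ / (1 - ‖Q‖)) with hE
  have hEpos : ∀ w, 0 < E w := fun w => Real.exp_pos _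
  refine ⟨E w1 * E w2 * E w3 / (δ1 * δ2 * δ3), by positivity, fun n m => ?_⟩
  rw [norm_div, norm_mul, norm_mul, norm_mul, norm_mul]
  have hnum : ‖qPochInf (w1 * Q ^ n) Q‖ * ‖qPochInf (w2 * Q ^ n) Q‖ * ‖qPochInf (w3 * Q ^ m) Q‖
      ≤ E w1 * E w2 * E w3 := by
    have b1 := norm_P_le hQ w1 n
    have b2 := norm_P_le hQ w2 n
    have b3 := norm_P_le hQ w3 m
    have n1 := norm_nonneg (qPochInf (w1 * Q ^ n) Q)
    have n2 := norm_nonneg (qPochInf (w2 * Q ^ n) Q)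
    have n3 := norm_nonneg (qPochInf (w3 * Q ^ m) Q)
    have e1 := (hEpos w1).le
    have e2 := (hEpos w2).le
    have e3 := (hEpos w3).le
    have h12 : ‖qPochInf (w1 * Q ^ n) Q‖ * ‖qPochInf (w2 * Q ^ n) Q‖ ≤ E w1 * E w2 :=
      mul_le_mul b1 b2 n2 e1
    exact mul_le_mul h12 b3 n3 (mul_nonneg e1 e2)
  have hden : δ1 * δ2 * δ3
      ≤ ‖qPochInf (p1 * Q ^ n) Q‖ * ‖qPochInf (p2 * Q ^ n) Q‖ * ‖qPochInf (p3 * Q ^ m) Q‖ := by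
    have b1 := hb1 n
    have b2 := hb2 n
    have b3 := hb3 m
    have h12 : δ1 * δ2 ≤ ‖qPochInf (p1 * Q ^ n) Q‖ * ‖qPochInf (p2 * Q ^ n) Q‖ :=
      mul_le_mul b1 b2 hδ2.le (norm_nonneg _)
    exact mul_le_mul h12 b3 hδ3.le (mul_nonneg (norm_nonneg _) (norm_nonneg _))
  have hdenpos : (0:ℝ) < δ1 * δ2 * δ3 := by positivity
  exact div_le_div₀ (by positivity) hnum hdenpos hden


/-! ### Pointwise integrand identities -/

noncomputable def Wc' (Q u v α β γ x : ℂ) : ℂ :=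
  qPochInf (Q * x / u) Q * qPochInf (Q * x / v) Q * qPochInf (Q * (α * β * γ * u * v) * x) Q /
    (qPochInf (α * x) Q * qPochInf (β * x) Q * qPochInf (γ * x) Q)

noncomputable def Fc (Q u v α β γ x : ℂ) : ℂ :=
  qPochInf (x / u) Q * qPochInf (x / v) Q * qPochInf ((α * β * γ * u * v) * x) Q /
    (qPochInf (α * x) Q * qPochInf (β * x) Q * qPochInf (γ * x) Q)

lemma peel_inv (hQ : ‖Q‖ < 1) {w : ℂ} (hw : (1:ℂ) - w ≠ 0) :
    qPochInf (w * Q) Q = qPochInf w Q * (1 - w)⁻¹ := by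
  rw [peel hQ w, mul_comm (1 - w), mul_assoc, mul_inv_cancel₀ hw, mul_one]

lemma pw_W (hQ : ‖Q‖ < 1) (u v α β γ x : ℂ) :
    Wc Q u v α β γ x = (1 - α * β * γ * u * v * x) * Wc' Q u v α β γ x := by
  rw [Wc, Wc']
  rw [peel hQ (α * β * γ * u * v * x),
    show (α * β * γ * u * v * x) * Q = Q * (α * β * γ * u * v) * x from by ring]
  ring

lemma pw_WQ (hQ : ‖Q‖ < 1) (u v α β γ x : ℂ) (hγx : (1:ℂ) - γ * x ≠ 0) :
    Wc Q u v α β (Q * γ) x = (1 - γ * x) * Wc' Q u v α β γ x := by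
  rw [Wc, Wc']
  rw [show α * β * (Q * γ) * u * v * x = Q * (α * β * γ * u * v) * x from by ring]
  rw [show Q * γ * x = (γ * x) * Q from by ring, peel_inv hQ hγx]
  rw [div_eq_mul_inv, div_eq_mul_inv, mul_inv, mul_inv, mul_inv, inv_inv]
  ring

lemma pw_F (hQ : ‖Q‖ < 1) {u v : ℂ} (hu : u ≠ 0) (hv : v ≠ 0) (α β γ x : ℂ)
    (hαx : (1:ℂ) - α * x ≠ 0) (hβx : (1:ℂ) - β * x ≠ 0) (hγx : (1:ℂ) - γ * x ≠ 0) :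
    u * v * (Fc Q u v α β γ x - Fc Q u v α β γ (Q * x)) =
      ((u * v * (α + β + γ) - v - u - u * v * (α * β * γ * u * v)) * x +
        (1 + (α * β * γ * u * v) * v + (α * β * γ * u * v) * u
          - u * v * (α * β + α * γ + β * γ)) * x ^ 2) * Wc' Q u v α β γ x := by
  have e1 : qPochInf (x / u) Q = (1 - x / u) * qPochInf (Q * x / u) Q := by
    rw [peel hQ (x / u), show (x / u) * Q = Q * x / u from by ring]
  have e2 : qPochInf (x / v) Q = (1 - x / v) * qPochInf (Q * x / v) Q := by
    rw [peel hQ (x / v), show (x / v) * Q = Q * x / v from by ring]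
  have e3 : qPochInf ((α * β * γ * u * v) * x) Q
      = (1 - (α * β * γ * u * v) * x) * qPochInf (Q * (α * β * γ * u * v) * x) Q := by
    rw [peel hQ ((α * β * γ * u * v) * x),
      show ((α * β * γ * u * v) * x) * Q = Q * (α * β * γ * u * v) * x from by ring]
  have f1 : qPochInf (x / u) Q * qPochInf (x / v) Q * qPochInf ((α * β * γ * u * v) * x) Q
      = (1 - x / u) * (1 - x / v) * (1 - (α * β * γ * u * v) * x) *
        (qPochInf (Q * x / u) Q * qPochInf (Q * x / v) Q *
          qPochInf (Q * (α * β * γ * u * v) * x) Q) := by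
    rw [e1, e2, e3]; ring
  have g1 : qPochInf (Q * x / u) Q = qPochInf ((Q * x) / u) Q := rfl
  have hFQ : Fc Q u v α β γ (Q * x)
      = (1 - α * x) * (1 - β * x) * (1 - γ * x) *
        (qPochInf (Q * x / u) Q * qPochInf (Q * x / v) Q *
          qPochInf (Q * (α * β * γ * u * v) * x) Q) /
        (qPochInf (α * x) Q * qPochInf (β * x) Q * qPochInf (γ * x) Q) := by
    rw [Fc]
    rw [show (α * β * γ * u * v) * (Q * x) = Q * (α * β * γ * u * v) * x from by ring]
    rw [show α * (Q * x) = (α * x) * Q from by ring, peel_inv hQ hαx]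
    rw [show β * (Q * x) = (β * x) * Q from by ring, peel_inv hQ hβx]
    rw [show γ * (Q * x) = (γ * x) * Q from by ring, peel_inv hQ hγx]
    rw [show Q * x / u = (Q*x)/u from rfl, show Q * x / v = (Q*x)/v from rfl]
    rw [div_eq_mul_inv, div_eq_mul_inv, mul_inv, mul_inv, mul_inv, mul_inv, mul_inv,
      inv_inv, inv_inv, inv_inv]
    ring
  rw [Fc, f1, hFQ, Wc']
  have hbracket : u * v * ((1 - x / u) * (1 - x / v) * (1 - (α * β * γ * u * v) * x))
      - u * v * ((1 - α * x) * (1 - β * x) * (1 - γ * x))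
      = ((u * v * (α + β + γ) - v - u - u * v * (α * β * γ * u * v)) * x +
        (1 + (α * β * γ * u * v) * v + (α * β * γ * u * v) * u
          - u * v * (α * β + α * γ + β * γ)) * x ^ 2) := by
    field_simp
    ring
  rw [div_eq_mul_inv, div_eq_mul_inv]
  linear_combination (qPochInf (Q * x / u) Q * qPochInf (Q * x / v) Q *
      qPochInf (Q * (α * β * γ * u * v) * x) Q *
      (qPochInf (α * x) Q * qPochInf (β * x) Q * qPochInf (γ * x) Q)⁻¹) * hbracket


/-! ### Shapes at support points, limits, summability -/

lemma tendsto_wQn (hQ : ‖Q‖ < 1) (w : ℂ) :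
    Tendsto (fun n : ℕ => w * Q ^ n) atTop (𝓝 0) := by
  have := tendsto_pow_atTop_nhds_zero_of_norm_lt_one (x := Q) hQ
  have h2 := this.const_mul w
  simpa using h2

lemma summable_shape (hQ : ‖Q‖ < 1) {f g : ℕ → ℂ} {Cf Cg : ℝ}
    (hf : ∀ n, ‖f n‖ ≤ Cf) (hg : ∀ n, ‖g n‖ ≤ Cg) :
    Summable (fun n : ℕ => (f n - g n) * Q ^ n) := by
  refine summable_of_norm_le_geom hQ (C := Cf + Cg) (fun n => ?_)
  rw [norm_mul, norm_pow]
  refine mul_le_mul_of_nonneg_right ?_ (pow_nonneg (norm_nonneg Q) n)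
  refine (norm_sub_le _ _).trans ?_
  exact add_le_add (hf n) (hg n)

lemma Wc'_at (Q u v α β γ t : ℂ) (n : ℕ) :
    Wc' Q u v α β γ (t * Q ^ n)
      = qPochInf ((Q * t / u) * Q ^ n) Q * qPochInf ((Q * t / v) * Q ^ n) Q *
          qPochInf ((Q * (α * β * γ * u * v) * t) * Q ^ n) Q /
        (qPochInf ((α * t) * Q ^ n) Q * qPochInf ((β * t) * Q ^ n) Q *
          qPochInf ((γ * t) * Q ^ n) Q) := by
  rw [Wc']
  rw [show Q * (t * Q ^ n) / u = (Q * t / u) * Q ^ n from by ring,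
    show Q * (t * Q ^ n) / v = (Q * t / v) * Q ^ n from by ring,
    show Q * (α * β * γ * u * v) * (t * Q ^ n) = (Q * (α * β * γ * u * v) * t) * Q ^ n from by
      ring,
    show α * (t * Q ^ n) = (α * t) * Q ^ n from by ring,
    show β * (t * Q ^ n) = (β * t) * Q ^ n from by ring,
    show γ * (t * Q ^ n) = (γ * t) * Q ^ n from by ring]

lemma Fc_at (Q u v α β γ t : ℂ) (n : ℕ) :
    Fc Q u v α β γ (t * Q ^ n)
      = qPochInf ((t / u) * Q ^ n) Q * qPochInf ((t / v) * Q ^ n) Q *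
          qPochInf (((α * β * γ * u * v) * t) * Q ^ n) Q /
        (qPochInf ((α * t) * Q ^ n) Q * qPochInf ((β * t) * Q ^ n) Q *
          qPochInf ((γ * t) * Q ^ n) Q) := by
  rw [Fc]
  rw [show t * Q ^ n / u = (t / u) * Q ^ n from by ring,
    show t * Q ^ n / v = (t / v) * Q ^ n from by ring,
    show (α * β * γ * u * v) * (t * Q ^ n) = ((α * β * γ * u * v) * t) * Q ^ n from by ring,
    show α * (t * Q ^ n) = (α * t) * Q ^ n from by ring,
    show β * (t * Q ^ n) = (β * t) * Q ^ n from by ring,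
    show γ * (t * Q ^ n) = (γ * t) * Q ^ n from by ring]

lemma Wc'_bound (hQ : ‖Q‖ < 1) (u v α β γ t : ℂ)
    (hαt : Fam Q (α * t)) (hβt : Fam Q (β * t)) (hγt : Fam Q (γ * t)) :
    ∃ C : ℝ, 0 ≤ C ∧ ∀ n : ℕ, ‖Wc' Q u v α β γ (t * Q ^ n)‖ ≤ C := by
  obtain ⟨C, hC0, hC⟩ := quot_bound hQ (Q * t / u) (Q * t / v) (Q * (α * β * γ * u * v) * t)
    (α * t) (β * t) (γ * t) hαt hβt hγt
  exact ⟨C, hC0, fun n => by rw [Wc'_at]; exact hC n n⟩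

lemma tendsto_quot_one (hQ : ‖Q‖ < 1) (w1 w2 w3 p1 p2 p3 : ℂ) :
    Tendsto (fun n : ℕ =>
      qPochInf (w1 * Q ^ n) Q * qPochInf (w2 * Q ^ n) Q * qPochInf (w3 * Q ^ n) Q /
        (qPochInf (p1 * Q ^ n) Q * qPochInf (p2 * Q ^ n) Q * qPochInf (p3 * Q ^ n) Q))
      atTop (𝓝 1) := by
  have H : ∀ w : ℂ, Tendsto (fun n : ℕ => qPochInf (w * Q ^ n) Q) atTop (𝓝 1) :=
    fun w => tendsto_one hQ (tendsto_wQn hQ w)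
  have hnum := ((H w1).mul (H w2)).mul (H w3)
  have hden := ((H p1).mul (H p2)).mul (H p3)
  simp only [mul_one] at hnum hden
  have := hnum.div hden one_ne_zero
  rw [div_one] at this
  exact this

/-! ### The one-step recurrence for `Tc` -/

lemma Tstep (hQ : ‖Q‖ < 1) {u v : ℂ} (hu : u ≠ 0) (hv : v ≠ 0) (α β γ : ℂ)
    (hαu : Fam Q (α * u)) (hαv : Fam Q (α * v)) (hβu : Fam Q (β * u)) (hβv : Fam Q (β * v))
    (hγu : Fam Q (γ * u)) (hγv : Fam Q (γ * v)) :
    Tc Q u v α β γ * ((1 - γ * u) * (1 - γ * v) * (1 - α * β * u * v))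
      = Tc Q u v α β (Q * γ) * ((1 - α * γ * u * v) * (1 - β * γ * u * v)
          * (1 - α * β * u * v)) := by
  classical
  set D := α * β * γ * u * v with hD
  set c1 : ℂ := u * v * (α + β + γ) - v - u - u * v * D with hc1
  set c2 : ℂ := 1 + D * v + D * u - u * v * (α * β + α * γ + β * γ) with hc2
  set A : ℕ → ℂ := fun n => (v * Wc' Q u v α β γ (v * Q ^ n)
    - u * Wc' Q u v α β γ (u * Q ^ n)) * Q ^ n with hA
  set B : ℕ → ℂ := fun n => (v * (v * Q ^ n) * Wc' Q u v α β γ (v * Q ^ n)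
    - u * (u * Q ^ n) * Wc' Q u v α β γ (u * Q ^ n)) * Q ^ n with hB
  obtain ⟨Cv, hCv0, hCv⟩ := Wc'_bound hQ u v α β γ v hαv hβv hγv
  obtain ⟨Cu, hCu0, hCu⟩ := Wc'_bound hQ u v α β γ u hαu hβu hγu
  have hsA : Summable A := by
    refine summable_shape hQ (Cf := ‖v‖ * Cv) (Cg := ‖u‖ * Cu) (fun n => ?_) (fun n => ?_)
    · rw [norm_mul]; exact mul_le_mul_of_nonneg_left (hCv n) (norm_nonneg v)
    · rw [norm_mul]; exact mul_le_mul_of_nonneg_left (hCu n) (norm_nonneg u)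
  have hsB : Summable B := by
    refine summable_shape hQ (Cf := ‖v‖ * ‖v‖ * Cv) (Cg := ‖u‖ * ‖u‖ * Cu)
      (fun n => ?_) (fun n => ?_)
    · rw [norm_mul, norm_mul]
      have h1 : ‖v * Q ^ n‖ ≤ ‖v‖ := by
        rw [norm_mul, norm_pow]
        calc ‖v‖ * ‖Q‖ ^ n ≤ ‖v‖ * 1 :=
              mul_le_mul_of_nonneg_left (pow_le_one₀ (norm_nonneg Q) hQ.le) (norm_nonneg v)
          _ = ‖v‖ := mul_one _
      have h2 := hCv n
      have := mul_le_mul h1 h2 (norm_nonneg _) (norm_nonneg v)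
      calc ‖v‖ * ‖v * Q ^ n‖ * ‖Wc' Q u v α β γ (v * Q ^ n)‖
          ≤ ‖v‖ * (‖v‖ * Cv) := by
            rw [mul_assoc]
            exact mul_le_mul_of_nonneg_left this (norm_nonneg v)
        _ = ‖v‖ * ‖v‖ * Cv := by ring
    · rw [norm_mul, norm_mul]
      have h1 : ‖u * Q ^ n‖ ≤ ‖u‖ := by
        rw [norm_mul, norm_pow]
        calc ‖u‖ * ‖Q‖ ^ n ≤ ‖u‖ * 1 :=
              mul_le_mul_of_nonneg_left (pow_le_one₀ (norm_nonneg Q) hQ.le) (norm_nonneg u)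
          _ = ‖u‖ := mul_one _
      have h2 := hCu n
      have := mul_le_mul h1 h2 (norm_nonneg _) (norm_nonneg u)
      calc ‖u‖ * ‖u * Q ^ n‖ * ‖Wc' Q u v α β γ (u * Q ^ n)‖
          ≤ ‖u‖ * (‖u‖ * Cu) := by
            rw [mul_assoc]
            exact mul_le_mul_of_nonneg_left this (norm_nonneg u)
        _ = ‖u‖ * ‖u‖ * Cu := by ring
  -- (i)
  have hTγ : Tc Q u v α β γ = (1 - Q) * ((∑' n, A n) - D * ∑' n, B n) := by
    rw [Tc]
    have hpt : ∀ n : ℕ, (v * Wc Q u v α β γ (v * Q ^ n)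
        - u * Wc Q u v α β γ (u * Q ^ n)) * Q ^ n = A n - D * B n := by
      intro n
      rw [pw_W hQ u v α β γ (v * Q ^ n), pw_W hQ u v α β γ (u * Q ^ n), hA, hB]
      simp only []
      rw [hD]
      ring
    rw [tsum_congr hpt, Summable.tsum_sub hsA (hsB.mul_left D), tsum_mul_left]
  -- (ii)
  have hTQγ : Tc Q u v α β (Q * γ) = (1 - Q) * ((∑' n, A n) - γ * ∑' n, B n) := by
    rw [Tc]
    have hpt : ∀ n : ℕ, (v * Wc Q u v α β (Q * γ) (v * Q ^ n)
        - u * Wc Q u v α β (Q * γ) (u * Q ^ n)) * Q ^ n = A n - γ * B n := by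
      intro n
      have hv1 : (1:ℂ) - γ * (v * Q ^ n) ≠ 0 := by
        rw [show γ * (v * Q ^ n) = (γ * v) * Q ^ n from by ring]
        exact hγv.one_sub_ne n
      have hu1 : (1:ℂ) - γ * (u * Q ^ n) ≠ 0 := by
        rw [show γ * (u * Q ^ n) = (γ * u) * Q ^ n from by ring]
        exact hγu.one_sub_ne n
      rw [pw_WQ hQ u v α β γ (v * Q ^ n) hv1, pw_WQ hQ u v α β γ (u * Q ^ n) hu1, hA, hB]
      simp only []
      ring
    rw [tsum_congr hpt, Summable.tsum_sub hsA (hsB.mul_left γ), tsum_mul_left]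
  -- (iii) telescoping
  have htel : c1 * (∑' n, A n) + c2 * (∑' n, B n) = 0 := by
    set G : ℕ → ℂ := fun n => u * v * (Fc Q u v α β γ (v * Q ^ n)
      - Fc Q u v α β γ (u * Q ^ n)) with hG
    have hGlim : Tendsto G atTop (𝓝 0) := by
      have hv2 : Tendsto (fun n => Fc Q u v α β γ (v * Q ^ n)) atTop (𝓝 1) := by
        have := tendsto_quot_one hQ (v / u) (v / v) ((α * β * γ * u * v) * v)
          (α * v) (β * v) (γ * v)
        refine this.congr (fun n => ?_)
        rw [Fc_at]
      have hu2 : Tendsto (fun n => Fc Q u v α β γ (u * Q ^ n)) atTop (𝓝 1) := by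
        have := tendsto_quot_one hQ (u / u) (u / v) ((α * β * γ * u * v) * u)
          (α * u) (β * u) (γ * u)
        refine this.congr (fun n => ?_)
        rw [Fc_at]
      have := ((hv2.sub hu2).const_mul (u * v))
      simpa using this
    have hpt : ∀ n : ℕ, G n - G (n + 1) = c1 * A n + c2 * B n := by
      intro n
      have hv3 : v * Q ^ (n + 1) = Q * (v * Q ^ n) := by ring
      have hu3 : u * Q ^ (n + 1) = Q * (u * Q ^ n) := by ring
      have pv := pw_F hQ hu hv α β γ (v * Q ^ n)
        (by rw [show α * (v * Q ^ n) = (α * v) * Q ^ n from by ring]; exact hαv.one_sub_ne n)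
        (by rw [show β * (v * Q ^ n) = (β * v) * Q ^ n from by ring]; exact hβv.one_sub_ne n)
        (by rw [show γ * (v * Q ^ n) = (γ * v) * Q ^ n from by ring]; exact hγv.one_sub_ne n)
      have pu := pw_F hQ hu hv α β γ (u * Q ^ n)
        (by rw [show α * (u * Q ^ n) = (α * u) * Q ^ n from by ring]; exact hαu.one_sub_ne n)
        (by rw [show β * (u * Q ^ n) = (β * u) * Q ^ n from by ring]; exact hβu.one_sub_ne n)
        (by rw [show γ * (u * Q ^ n) = (γ * u) * Q ^ n from by ring]; exact hγu.one_sub_ne n)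
      rw [hG]
      simp only []
      rw [hv3, hu3, hA, hB]
      simp only []
      simp only [hc1, hc2, hD]
      linear_combination pv - pu
    have hsum_tel : Summable (fun n => G n - G (n + 1)) := by
      refine ((hsA.mul_left c1).add (hsB.mul_left c2)).congr (fun n => ?_)
      exact (hpt n).symm
    have hG0 : G 0 = 0 := by
      rw [hG]
      simp only [pow_zero, mul_one]
      have hFv : Fc Q u v α β γ v = 0 := by
        rw [Fc]
        have : qPochInf (v / v) Q = 0 := by
          rw [div_self hv]
          exact eq_zero hQ (j := 0) (by norm_num)
        rw [this]
        simp
      have hFu : Fc Q u v α β γ u = 0 := by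
        rw [Fc]
        have : qPochInf (u / u) Q = 0 := by
          rw [div_self hu]
          exact eq_zero hQ (j := 0) (by norm_num)
        rw [this]
        simp
      rw [hFv, hFu]
      ring
    have h1 : (∑' n, (G n - G (n + 1))) = 0 := by
      rw [telescope hGlim hsum_tel, hG0, sub_zero]
    rw [← tsum_mul_left, ← tsum_mul_left,
      ← Summable.tsum_add (hsA.mul_left c1) (hsB.mul_left c2)]
    rw [← h1]
    exact tsum_congr (fun n => (hpt n).symm)
  -- final combination
  rw [hTγ, hTQγ]
  simp only [hc1, hc2, hD] at htel
  simp only [hD]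
  linear_combination ((1 - Q) * (γ - α * β * γ * u * v)) * htel


lemma Fam.congr {w w' : ℂ} (h : Fam Q w) (e : w = w') : Fam Q w' := e ▸ h

lemma Fam.one_sub_ne0 {w : ℂ} (h : Fam Q w) : (1:ℂ) - w ≠ 0 := by
  have := h.one_sub_ne 0
  simpa using this

lemma Fam.pochInf_ne0 (hQ : ‖Q‖ < 1) {w : ℂ} (h : Fam Q w) : qPochInf w Q ≠ 0 :=
  ne_zero hQ h

lemma cancel_mul_div (A E c : ℂ) (hc : c ≠ 0) : A / (c * E) * c = A / E := by
  rcases eq_or_ne E 0 with h | h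
  · simp [h]
  · field_simp

/-! ### The one-step recurrence for `Rc` -/

lemma Rstep (hQ : ‖Q‖ < 1) (u v α β γ : ℂ)
    (hXu : (1:ℂ) - γ * u ≠ 0) (hXv : (1:ℂ) - γ * v ≠ 0) :
    Rc Q u v α β γ * ((1 - γ * u) * (1 - γ * v))
      = Rc Q u v α β (Q * γ) * ((1 - α * γ * u * v) * (1 - β * γ * u * v)) := by
  rw [Rc, Rc]
  rw [show qPochInf (α * γ * u * v) Q
      = (1 - α * γ * u * v) * qPochInf (α * (Q * γ) * u * v) Q from by
    rw [peel hQ (α * γ * u * v),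
      show (α * γ * u * v) * Q = α * (Q * γ) * u * v from by ring]]
  rw [show qPochInf (β * γ * u * v) Q
      = (1 - β * γ * u * v) * qPochInf (β * (Q * γ) * u * v) Q from by
    rw [peel hQ (β * γ * u * v),
      show (β * γ * u * v) * Q = β * (Q * γ) * u * v from by ring]]
  rw [show qPochInf (γ * u) Q = (1 - γ * u) * qPochInf (Q * γ * u) Q from by
    rw [peel hQ (γ * u), show (γ * u) * Q = Q * γ * u from by ring]]
  rw [show qPochInf (γ * v) Q = (1 - γ * v) * qPochInf (Q * γ * v) Q from by
    rw [peel hQ (γ * v), show (γ * v) * Q = Q * γ * v from by ring]]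
  have hden : qPochInf (α * u) Q * qPochInf (β * u) Q * ((1 - γ * u) * qPochInf (Q * γ * u) Q) *
      qPochInf (α * v) Q * qPochInf (β * v) Q * ((1 - γ * v) * qPochInf (Q * γ * v) Q)
      = ((1 - γ * u) * (1 - γ * v)) * (qPochInf (α * u) Q * qPochInf (β * u) Q *
        qPochInf (Q * γ * u) Q * qPochInf (α * v) Q * qPochInf (β * v) Q *
        qPochInf (Q * γ * v) Q) := by ring
  rw [hden, cancel_mul_div _ _ _ (mul_ne_zero hXu hXv)]
  rw [div_mul_eq_mul_div]
  congr 1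
  ring


/-! ### Limits as the third parameter runs down the orbit `γ Q^k → 0` -/

lemma Wc_at_orbit (Q u v α β γ t : ℂ) (k n : ℕ) :
    Wc Q u v α β (γ * Q ^ k) (t * Q ^ n)
      = qPochInf ((Q * t / u) * Q ^ n) Q * qPochInf ((Q * t / v) * Q ^ n) Q *
          qPochInf (((α * β * γ * u * v * t) * Q ^ n) * Q ^ k) Q /
        (qPochInf ((α * t) * Q ^ n) Q * qPochInf ((β * t) * Q ^ n) Q *
          qPochInf (((γ * t) * Q ^ n) * Q ^ k) Q) := by
  rw [Wc]
  rw [show Q * (t * Q ^ n) / u = (Q * t / u) * Q ^ n from by ring,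
    show Q * (t * Q ^ n) / v = (Q * t / v) * Q ^ n from by ring,
    show α * β * (γ * Q ^ k) * u * v * (t * Q ^ n)
      = ((α * β * γ * u * v * t) * Q ^ n) * Q ^ k from by ring,
    show α * (t * Q ^ n) = (α * t) * Q ^ n from by ring,
    show β * (t * Q ^ n) = (β * t) * Q ^ n from by ring,
    show (γ * Q ^ k) * (t * Q ^ n) = ((γ * t) * Q ^ n) * Q ^ k from by ring]

lemma Wc_zero3_at (Q u v α β t : ℂ) (n : ℕ) :
    Wc Q u v α β 0 (t * Q ^ n)
      = qPochInf ((Q * t / u) * Q ^ n) Q * qPochInf ((Q * t / v) * Q ^ n) Q * 1 /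
        (qPochInf ((α * t) * Q ^ n) Q * qPochInf ((β * t) * Q ^ n) Q * 1) := by
  rw [Wc]
  rw [show Q * (t * Q ^ n) / u = (Q * t / u) * Q ^ n from by ring,
    show Q * (t * Q ^ n) / v = (Q * t / v) * Q ^ n from by ring,
    show α * β * 0 * u * v * (t * Q ^ n) = (0:ℂ) from by ring,
    show α * (t * Q ^ n) = (α * t) * Q ^ n from by ring,
    show β * (t * Q ^ n) = (β * t) * Q ^ n from by ring,
    show (0:ℂ) * (t * Q ^ n) = (0:ℂ) from by ring,
    qPochInf_zero]

lemma Wc_orbit_tendsto (hQ : ‖Q‖ < 1) (u v α β γ t : ℂ)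
    (hαt : Fam Q (α * t)) (hβt : Fam Q (β * t)) (n : ℕ) :
    Tendsto (fun k => Wc Q u v α β (γ * Q ^ k) (t * Q ^ n)) atTop
      (𝓝 (Wc Q u v α β 0 (t * Q ^ n))) := by
  rw [Wc_zero3_at]
  have H : ∀ w : ℂ, Tendsto (fun k : ℕ => qPochInf (w * Q ^ k) Q) atTop (𝓝 1) :=
    fun w => tendsto_one hQ (tendsto_wQn hQ w)
  have hnum : Tendsto (fun k => qPochInf ((Q * t / u) * Q ^ n) Q *
      qPochInf ((Q * t / v) * Q ^ n) Q *
      qPochInf (((α * β * γ * u * v * t) * Q ^ n) * Q ^ k) Q) atTop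
      (𝓝 (qPochInf ((Q * t / u) * Q ^ n) Q * qPochInf ((Q * t / v) * Q ^ n) Q * 1)) :=
    tendsto_const_nhds.mul (H _)
  have hden : Tendsto (fun k => qPochInf ((α * t) * Q ^ n) Q *
      qPochInf ((β * t) * Q ^ n) Q * qPochInf (((γ * t) * Q ^ n) * Q ^ k) Q) atTop
      (𝓝 (qPochInf ((α * t) * Q ^ n) Q * qPochInf ((β * t) * Q ^ n) Q * 1)) :=
    tendsto_const_nhds.mul (H _)
  have hne : qPochInf ((α * t) * Q ^ n) Q * qPochInf ((β * t) * Q ^ n) Q * (1:ℂ) ≠ 0 := by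
    refine mul_ne_zero (mul_ne_zero ?_ ?_) one_ne_zero
    · exact hαt.pochInf_ne hQ n
    · exact hβt.pochInf_ne hQ n
  have := hnum.div hden hne
  refine this.congr (fun k => ?_)
  rw [Pi.div_apply]
  exact (Wc_at_orbit Q u v α β γ t k n).symm

lemma Tc_lim (hQ : ‖Q‖ < 1) (u v α β γ : ℂ)
    (hαu : Fam Q (α * u)) (hαv : Fam Q (α * v)) (hβu : Fam Q (β * u)) (hβv : Fam Q (β * v))
    (hγu : Fam Q (γ * u)) (hγv : Fam Q (γ * v)) :
    Tendsto (fun k => Tc Q u v α β (γ * Q ^ k)) atTop (𝓝 (Tc Q u v α β 0)) := by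
  obtain ⟨Cv, hCv0, hCv⟩ := quot_bound hQ (Q * v / u) (Q * v / v) (α * β * γ * u * v * v)
    (α * v) (β * v) (γ * v) hαv hβv hγv
  obtain ⟨Cu, hCu0, hCu⟩ := quot_bound hQ (Q * u / u) (Q * u / v) (α * β * γ * u * v * u)
    (α * u) (β * u) (γ * u) hαu hβu hγu
  have hWb : ∀ (t : ℂ) (C : ℝ), (∀ n m, ‖qPochInf ((Q * t / u) * Q ^ n) Q *
        qPochInf ((Q * t / v) * Q ^ n) Q * qPochInf ((α * β * γ * u * v * t) * Q ^ m) Q /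
        (qPochInf ((α * t) * Q ^ n) Q * qPochInf ((β * t) * Q ^ n) Q *
          qPochInf ((γ * t) * Q ^ m) Q)‖ ≤ C) →
      ∀ k n, ‖Wc Q u v α β (γ * Q ^ k) (t * Q ^ n)‖ ≤ C := by
    intro t C hC k n
    rw [Wc_at_orbit]
    have := hC n (n + k)
    rw [pow_add] at this
    convert this using 4 <;> ring
  have hbv := hWb v Cv hCv
  have hbu := hWb u Cu hCu
  have key : Tendsto (fun k => ∑' n : ℕ, (v * Wc Q u v α β (γ * Q ^ k) (v * Q ^ n)
      - u * Wc Q u v α β (γ * Q ^ k) (u * Q ^ n)) * Q ^ n) atTop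
      (𝓝 (∑' n : ℕ, (v * Wc Q u v α β 0 (v * Q ^ n)
      - u * Wc Q u v α β 0 (u * Q ^ n)) * Q ^ n)) := by
    refine tendsto_tsum_of_dominated_convergence
      (bound := fun n => (‖v‖ * Cv + ‖u‖ * Cu) * ‖Q‖ ^ n)
      (summable_geom_mul hQ _) (fun n => ?_) ?_
    · have h1 := (Wc_orbit_tendsto hQ u v α β γ v hαv hβv n).const_mul v
      have h2 := (Wc_orbit_tendsto hQ u v α β γ u hαu hβu n).const_mul u
      exact ((h1.sub h2).mul_const (Q ^ n))
    · refine Eventually.of_forall (fun k => fun n => ?_)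
      rw [norm_mul, norm_pow]
      refine mul_le_mul_of_nonneg_right ?_ (pow_nonneg (norm_nonneg Q) n)
      refine (norm_sub_le _ _).trans ?_
      refine add_le_add ?_ ?_
      · rw [norm_mul]
        exact mul_le_mul_of_nonneg_left (hbv k n) (norm_nonneg v)
      · rw [norm_mul]
        exact mul_le_mul_of_nonneg_left (hbu k n) (norm_nonneg u)
  have := key.const_mul (1 - Q)
  exact this

lemma Rc_at_orbit (hQ : ‖Q‖ < 1) (u v α β γ : ℂ) (k : ℕ) :
    Rc Q u v α β (γ * Q ^ k)
      = (1 - Q) * v * (qPochInf Q Q * qPochInf (u / v) Q * qPochInf (Q * v / u) Q *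
          qPochInf (α * β * u * v) Q * qPochInf ((α * γ * u * v) * Q ^ k) Q *
          qPochInf ((β * γ * u * v) * Q ^ k) Q) /
        (qPochInf (α * u) Q * qPochInf (β * u) Q * qPochInf ((γ * u) * Q ^ k) Q *
          qPochInf (α * v) Q * qPochInf (β * v) Q * qPochInf ((γ * v) * Q ^ k) Q) := by
  rw [Rc]
  rw [show α * (γ * Q ^ k) * u * v = (α * γ * u * v) * Q ^ k from by ring,
    show β * (γ * Q ^ k) * u * v = (β * γ * u * v) * Q ^ k from by ring,
    show (γ * Q ^ k) * u = (γ * u) * Q ^ k from by ring,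
    show (γ * Q ^ k) * v = (γ * v) * Q ^ k from by ring]

lemma Rc_zero3 (Q u v α β : ℂ) :
    Rc Q u v α β 0
      = (1 - Q) * v * (qPochInf Q Q * qPochInf (u / v) Q * qPochInf (Q * v / u) Q *
          qPochInf (α * β * u * v) Q * 1 * 1) /
        (qPochInf (α * u) Q * qPochInf (β * u) Q * 1 *
          qPochInf (α * v) Q * qPochInf (β * v) Q * 1) := by
  rw [Rc]
  rw [show α * 0 * u * v = (0:ℂ) from by ring, show β * 0 * u * v = (0:ℂ) from by ring,
    show (0:ℂ) * u = (0:ℂ) from by ring, show (0:ℂ) * v = (0:ℂ) from by ring, qPochInf_zero]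

lemma Rc_lim (hQ : ‖Q‖ < 1) (u v α β γ : ℂ)
    (hαu : Fam Q (α * u)) (hαv : Fam Q (α * v)) (hβu : Fam Q (β * u)) (hβv : Fam Q (β * v)) :
    Tendsto (fun k => Rc Q u v α β (γ * Q ^ k)) atTop (𝓝 (Rc Q u v α β 0)) := by
  rw [Rc_zero3]
  have H : ∀ w : ℂ, Tendsto (fun k : ℕ => qPochInf (w * Q ^ k) Q) atTop (𝓝 1) :=
    fun w => tendsto_one hQ (tendsto_wQn hQ w)
  have hnum : Tendsto (fun k => (1 - Q) * v * (qPochInf Q Q * qPochInf (u / v) Q *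
      qPochInf (Q * v / u) Q * qPochInf (α * β * u * v) Q *
      qPochInf ((α * γ * u * v) * Q ^ k) Q * qPochInf ((β * γ * u * v) * Q ^ k) Q)) atTop
      (𝓝 ((1 - Q) * v * (qPochInf Q Q * qPochInf (u / v) Q * qPochInf (Q * v / u) Q *
        qPochInf (α * β * u * v) Q * 1 * 1))) :=
    tendsto_const_nhds.mul (((tendsto_const_nhds.mul (H _)).mul (H _)))
  have hden : Tendsto (fun k => qPochInf (α * u) Q * qPochInf (β * u) Q *
      qPochInf ((γ * u) * Q ^ k) Q * qPochInf (α * v) Q * qPochInf (β * v) Q *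
      qPochInf ((γ * v) * Q ^ k) Q) atTop
      (𝓝 (qPochInf (α * u) Q * qPochInf (β * u) Q * 1 *
        qPochInf (α * v) Q * qPochInf (β * v) Q * 1)) := by
    exact ((((tendsto_const_nhds.mul (H (γ * u))).mul
      tendsto_const_nhds).mul tendsto_const_nhds).mul (H (γ * v)))
  have hne : qPochInf (α * u) Q * qPochInf (β * u) Q * 1 *
      qPochInf (α * v) Q * qPochInf (β * v) Q * (1:ℂ) ≠ 0 := by
    refine mul_ne_zero (mul_ne_zero (mul_ne_zero (mul_ne_zero (mul_ne_zero ?_ ?_)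
      one_ne_zero) ?_) ?_) one_ne_zero
    · exact hαu.pochInf_ne0 hQ
    · exact hβu.pochInf_ne0 hQ
    · exact hαv.pochInf_ne0 hQ
    · exact hβv.pochInf_ne0 hQ
  have := hnum.div hden hne
  refine this.congr (fun k => ?_)
  rw [Pi.div_apply]
  exact (Rc_at_orbit hQ u v α β γ k).symm


/-! ### The stage lemma: reducing the third parameter to zero -/

lemma stage (hQ : ‖Q‖ < 1) {u v : ℂ} (hu : u ≠ 0) (hv : v ≠ 0) (α β γ : ℂ)
    (hαu : Fam Q (α * u)) (hαv : Fam Q (α * v)) (hβu : Fam Q (β * u)) (hβv : Fam Q (β * v))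
    (hγu : Fam Q (γ * u)) (hγv : Fam Q (γ * v)) (hαβ : Fam Q (α * β * u * v)) :
    Tc Q u v α β γ * Rc Q u v α β 0 = Tc Q u v α β 0 * Rc Q u v α β γ := by
  classical
  set tk : ℕ → ℂ := fun k => Tc Q u v α β (γ * Q ^ k) with htk
  set rk : ℕ → ℂ := fun k => Rc Q u v α β (γ * Q ^ k) with hrk
  set X : ℕ → ℂ := fun k => (1 - (γ * u) * Q ^ k) * (1 - (γ * v) * Q ^ k) with hX
  set Y : ℕ → ℂ := fun k => (1 - (α * γ * u * v) * Q ^ k) * (1 - (β * γ * u * v) * Q ^ k)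
    with hY
  have hαβ0 : (1:ℂ) - α * β * u * v ≠ 0 := hαβ.one_sub_ne0
  have hT1 : ∀ k, tk k * X k = tk (k + 1) * Y k := by
    intro k
    have hstep := Tstep hQ hu hv α β (γ * Q ^ k) hαu hαv hβu hβv
      ((hγu.shift k).congr (by ring)) ((hγv.shift k).congr (by ring))
    rw [show Q * (γ * Q ^ k) = γ * Q ^ (k + 1) from by ring] at hstep
    refine mul_right_cancel₀ hαβ0 ?_
    rw [htk, hX, hY]
    simp only []
    linear_combination hstep
  have hR1 : ∀ k, rk k * X k = rk (k + 1) * Y k := by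
    intro k
    have h1 : (1:ℂ) - (γ * Q ^ k) * u ≠ 0 := by
      rw [show (γ * Q ^ k) * u = (γ * u) * Q ^ k from by ring]
      exact hγu.one_sub_ne k
    have h2 : (1:ℂ) - (γ * Q ^ k) * v ≠ 0 := by
      rw [show (γ * Q ^ k) * v = (γ * v) * Q ^ k from by ring]
      exact hγv.one_sub_ne k
    have hstep := Rstep hQ u v α β (γ * Q ^ k) h1 h2
    rw [show Q * (γ * Q ^ k) = γ * Q ^ (k + 1) from by ring] at hstep
    rw [hrk, hX, hY]
    simp only []
    linear_combination hstep
  have hXne : ∀ k, X k ≠ 0 := fun k =>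
    mul_ne_zero (hγu.one_sub_ne k) (hγv.one_sub_ne k)
  have hPXne : ∀ k : ℕ, (∏ j ∈ Finset.range k, X j) ≠ 0 := by
    intro k
    exact Finset.prod_ne_zero_iff.2 (fun j _ => hXne j)
  have hindT : ∀ k : ℕ, tk 0 * (∏ j ∈ Finset.range k, X j)
      = tk k * (∏ j ∈ Finset.range k, Y j) := by
    intro k
    induction k with
    | zero => simp
    | succ m ih =>
      rw [Finset.prod_range_succ, Finset.prod_range_succ]
      calc tk 0 * ((∏ j ∈ Finset.range m, X j) * X m)
          = (tk 0 * (∏ j ∈ Finset.range m, X j)) * X m := by ring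
        _ = (tk m * (∏ j ∈ Finset.range m, Y j)) * X m := by rw [ih]
        _ = (tk m * X m) * (∏ j ∈ Finset.range m, Y j) := by ring
        _ = (tk (m + 1) * Y m) * (∏ j ∈ Finset.range m, Y j) := by rw [hT1 m]
        _ = tk (m + 1) * ((∏ j ∈ Finset.range m, Y j) * Y m) := by ring
  have hindR : ∀ k : ℕ, rk 0 * (∏ j ∈ Finset.range k, X j)
      = rk k * (∏ j ∈ Finset.range k, Y j) := by
    intro k
    induction k with
    | zero => simp
    | succ m ih =>
      rw [Finset.prod_range_succ, Finset.prod_range_succ]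
      calc rk 0 * ((∏ j ∈ Finset.range m, X j) * X m)
          = (rk 0 * (∏ j ∈ Finset.range m, X j)) * X m := by ring
        _ = (rk m * (∏ j ∈ Finset.range m, Y j)) * X m := by rw [ih]
        _ = (rk m * X m) * (∏ j ∈ Finset.range m, Y j) := by ring
        _ = (rk (m + 1) * Y m) * (∏ j ∈ Finset.range m, Y j) := by rw [hR1 m]
        _ = rk (m + 1) * ((∏ j ∈ Finset.range m, Y j) * Y m) := by ring
  have hcross : ∀ k, tk 0 * rk k = tk k * rk 0 := by
    intro k
    refine mul_right_cancel₀ (hPXne k) ?_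
    linear_combination (rk k) * hindT k - (tk k) * hindR k
  have hTlim : Tendsto tk atTop (𝓝 (Tc Q u v α β 0)) :=
    Tc_lim hQ u v α β γ hαu hαv hβu hβv hγu hγv
  have hRlim : Tendsto rk atTop (𝓝 (Rc Q u v α β 0)) :=
    Rc_lim hQ u v α β γ hαu hαv hβu hβv
  have h1 : Tendsto (fun k => tk 0 * rk k) atTop (𝓝 (tk 0 * Rc Q u v α β 0)) :=
    hRlim.const_mul _
  have h2 : Tendsto (fun k => tk k * rk 0) atTop (𝓝 (Tc Q u v α β 0 * rk 0)) :=
    hTlim.mul_const _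
  have h3 : tk 0 * Rc Q u v α β 0 = Tc Q u v α β 0 * rk 0 :=
    tendsto_nhds_unique (h1.congr (fun k => hcross k)) h2
  have h4 : tk 0 = Tc Q u v α β γ := by
    rw [htk]
    simp only []
    rw [pow_zero, mul_one]
  have h5 : rk 0 = Rc Q u v α β γ := by
    rw [hrk]
    simp only []
    rw [pow_zero, mul_one]
  rw [h4, h5] at h3
  exact h3


/-! ### Plain shape and bound for `Wc` -/

lemma Wc_at (Q u v α β γ t : ℂ) (n : ℕ) :
    Wc Q u v α β γ (t * Q ^ n)
      = qPochInf ((Q * t / u) * Q ^ n) Q * qPochInf ((Q * t / v) * Q ^ n) Q *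
          qPochInf ((α * β * γ * u * v * t) * Q ^ n) Q /
        (qPochInf ((α * t) * Q ^ n) Q * qPochInf ((β * t) * Q ^ n) Q *
          qPochInf ((γ * t) * Q ^ n) Q) := by
  rw [Wc]
  rw [show Q * (t * Q ^ n) / u = (Q * t / u) * Q ^ n from by ring,
    show Q * (t * Q ^ n) / v = (Q * t / v) * Q ^ n from by ring,
    show α * β * γ * u * v * (t * Q ^ n) = (α * β * γ * u * v * t) * Q ^ n from by ring,
    show α * (t * Q ^ n) = (α * t) * Q ^ n from by ring,
    show β * (t * Q ^ n) = (β * t) * Q ^ n from by ring,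
    show γ * (t * Q ^ n) = (γ * t) * Q ^ n from by ring]

lemma Wc_bound (hQ : ‖Q‖ < 1) (u v α β γ t : ℂ)
    (hαt : Fam Q (α * t)) (hβt : Fam Q (β * t)) (hγt : Fam Q (γ * t)) :
    ∃ C : ℝ, 0 ≤ C ∧ ∀ n : ℕ, ‖Wc Q u v α β γ (t * Q ^ n)‖ ≤ C := by
  obtain ⟨C, hC0, hC⟩ := quot_bound hQ (Q * t / u) (Q * t / v) (α * β * γ * u * v * t)
    (α * t) (β * t) (γ * t) hαt hβt hγt
  exact ⟨C, hC0, fun n => by rw [Wc_at]; exact hC n n⟩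

/-! ### Special evaluation at `α = β = 0`, `γ = Q/v` -/

lemma eval_special (hQ : ‖Q‖ < 1) {u v : ℂ} (hu : u ≠ 0) (hv : v ≠ 0)
    (hfam : Fam Q (Q * u / v)) :
    Tc Q u v 0 0 (Q / v) = (1 - Q) * (-u * qPochInf (v / u) Q) := by
  have fQ1 : Fam Q (Q * 1) := Fam.of_norm_lt_one hQ (by simpa using hQ)
  have hWv : ∀ n : ℕ, Wc Q u v 0 0 (Q / v) (v * Q ^ n)
      = qPochInf ((Q * v / u) * Q ^ n) Q := by
    intro n
    rw [Wc]
    rw [show (0:ℂ) * 0 * (Q / v) * u * v * (v * Q ^ n) = 0 from by ring,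
      show (0:ℂ) * (v * Q ^ n) = 0 from by ring, qPochInf_zero,
      show Q * (v * Q ^ n) / v = (Q * 1) * Q ^ n from by field_simp,
      show (Q / v) * (v * Q ^ n) = (Q * 1) * Q ^ n from by field_simp,
      show Q * (v * Q ^ n) / u = (Q * v / u) * Q ^ n from by ring]
    rw [mul_one, one_mul, one_mul, mul_div_assoc, div_self (fQ1.pochInf_ne hQ n), mul_one]
  have hWu : ∀ n : ℕ, Wc Q u v 0 0 (Q / v) (u * Q ^ n)
      = qPochInf ((Q * 1) * Q ^ n) Q := by
    intro n
    rw [Wc]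
    rw [show (0:ℂ) * 0 * (Q / v) * u * v * (u * Q ^ n) = 0 from by ring,
      show (0:ℂ) * (u * Q ^ n) = 0 from by ring, qPochInf_zero,
      show Q * (u * Q ^ n) / v = (Q * u / v) * Q ^ n from by ring,
      show (Q / v) * (u * Q ^ n) = (Q * u / v) * Q ^ n from by ring,
      show Q * (u * Q ^ n) / u = (Q * 1) * Q ^ n from by field_simp]
    rw [mul_one, one_mul, one_mul, mul_div_assoc, div_self (hfam.pochInf_ne hQ n), mul_one]
  set G : ℕ → ℂ := fun n => qPochInf ((v / u) * Q ^ n) Q - qPochInf ((1:ℂ) * Q ^ n) Q with hG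
  have hGpt : ∀ n : ℕ, G n - G (n + 1)
      = (-(v / u) * qPochInf ((Q * v / u) * Q ^ n) Q
        + qPochInf ((Q * 1) * Q ^ n) Q) * Q ^ n := by
    intro n
    rw [hG]
    simp only []
    have p1 : qPochInf ((v / u) * Q ^ n) Q
        = (1 - (v / u) * Q ^ n) * qPochInf (((v / u) * Q ^ (n + 1))) Q := by
      rw [peel hQ ((v / u) * Q ^ n), show ((v / u) * Q ^ n) * Q = (v / u) * Q ^ (n + 1) from by
        ring]
    have p2 : qPochInf ((1:ℂ) * Q ^ n) Q
        = (1 - (1:ℂ) * Q ^ n) * qPochInf (((1:ℂ) * Q ^ (n + 1))) Q := by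
      rw [peel hQ ((1:ℂ) * Q ^ n), show ((1:ℂ) * Q ^ n) * Q = (1:ℂ) * Q ^ (n + 1) from by ring]
    rw [p1, p2]
    rw [show (v / u) * Q ^ (n + 1) = (Q * v / u) * Q ^ n from by ring,
      show (1:ℂ) * Q ^ (n + 1) = (Q * 1) * Q ^ n from by ring]
    ring
  have hterm : ∀ n : ℕ, (v * Wc Q u v 0 0 (Q / v) (v * Q ^ n)
      - u * Wc Q u v 0 0 (Q / v) (u * Q ^ n)) * Q ^ n = -u * (G n - G (n + 1)) := by
    intro n
    rw [hWv n, hWu n, hGpt n]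
    have huv : u * (v / u) = v := by field_simp
    linear_combination (-(Q ^ n) * qPochInf ((Q * v / u) * Q ^ n) Q) * huv
  have hsum_tel : Summable (fun n => G n - G (n + 1)) := by
    have : Summable (fun n : ℕ => (qPochInf ((Q * 1) * Q ^ n) Q
        - (v / u) * qPochInf ((Q * v / u) * Q ^ n) Q) * Q ^ n) := by
      refine summable_shape hQ (Cf := Real.exp (‖Q * 1‖ / (1 - ‖Q‖)))
        (Cg := ‖v / u‖ * Real.exp (‖Q * v / u‖ / (1 - ‖Q‖))) (fun n => ?_) (fun n => ?_)
      · exact norm_P_le hQ (Q * 1) n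
      · rw [norm_mul]
        exact mul_le_mul_of_nonneg_left (norm_P_le hQ (Q * v / u) n) (norm_nonneg _)
    refine this.congr (fun n => ?_)
    rw [hGpt n]
    ring
  have hGlim : Tendsto G atTop (𝓝 0) := by
    have h1 := tendsto_one hQ (tendsto_wQn hQ (v / u))
    have h2 := tendsto_one hQ (tendsto_wQn hQ (1:ℂ))
    have h3 := h1.sub h2
    have h4 : (1:ℂ) - 1 = 0 := by norm_num
    rw [hG, ← h4]
    exact h3
  have hG0 : G 0 = qPochInf (v / u) Q := by
    rw [hG]
    simp only [pow_zero, mul_one, one_mul]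
    have : qPochInf 1 Q = 0 := eq_zero hQ (j := 0) (by norm_num)
    rw [this, sub_zero]
  rw [Tc]
  congr 1
  rw [tsum_congr hterm, tsum_mul_left, telescope hGlim hsum_tel, hG0, sub_zero]

/-! ### Symmetry in the parameters -/

lemma Wc_sym1 (Q u v α β x : ℂ) : Wc Q u v α β 0 x = Wc Q u v α 0 β x := by
  rw [Wc, Wc]
  rw [show α * β * 0 * u * v * x = (0:ℂ) from by ring,
    show α * 0 * β * u * v * x = (0:ℂ) from by ring,
    show (0:ℂ) * x = 0 from by ring, qPochInf_zero]
  ring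

lemma Wc_sym2 (Q u v α x : ℂ) : Wc Q u v α 0 0 x = Wc Q u v 0 0 α x := by
  rw [Wc, Wc]
  rw [show α * 0 * 0 * u * v * x = (0:ℂ) from by ring,
    show (0:ℂ) * 0 * α * u * v * x = (0:ℂ) from by ring,
    show (0:ℂ) * x = 0 from by ring, qPochInf_zero]
  ring

lemma Tc_sym1 (Q u v α β : ℂ) : Tc Q u v α β 0 = Tc Q u v α 0 β := by
  rw [Tc, Tc]
  congr 1
  refine tsum_congr (fun n => ?_)
  rw [Wc_sym1, Wc_sym1]

lemma Tc_sym2 (Q u v α : ℂ) : Tc Q u v α 0 0 = Tc Q u v 0 0 α := by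
  rw [Tc, Tc]
  congr 1
  refine tsum_congr (fun n => ?_)
  rw [Wc_sym2, Wc_sym2]

lemma Rc_sym1 (Q u v α β : ℂ) : Rc Q u v α β 0 = Rc Q u v α 0 β := by
  rw [Rc, Rc]
  rw [show α * β * u * v = α * β * u * v from rfl]
  rw [show α * 0 * u * v = (0:ℂ) from by ring, show β * 0 * u * v = (0:ℂ) from by ring,
    show (0:ℂ) * β * u * v = (0:ℂ) from by ring,
    show (0:ℂ) * u = (0:ℂ) from by ring, show (0:ℂ) * v = (0:ℂ) from by ring, qPochInf_zero]
  ring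

lemma Rc_sym2 (Q u v α : ℂ) : Rc Q u v α 0 0 = Rc Q u v 0 0 α := by
  rw [Rc, Rc]
  rw [show α * 0 * u * v = (0:ℂ) from by ring,
    show (0:ℂ) * 0 * u * v = (0:ℂ) from by ring,
    show (0:ℂ) * α * u * v = (0:ℂ) from by ring,
    show (0:ℂ) * u = (0:ℂ) from by ring, show (0:ℂ) * v = (0:ℂ) from by ring, qPochInf_zero]
  ring


/-! ### Degenerate cases: `v = u Q^m` or `u = v Q^m` make both sides vanish -/

lemma Tc_deg_A (hQ : ‖Q‖ < 1) {u v : ℂ} (hu : u ≠ 0) (hv : v ≠ 0) (α β γ : ℂ)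
    (hαu : Fam Q (α * u)) (hβu : Fam Q (β * u)) (hγu : Fam Q (γ * u))
    (m : ℕ) (hm : v = u * Q ^ m) :
    Tc Q u v α β γ = 0 := by
  classical
  set g : ℕ → ℂ := fun k => u * Wc Q u v α β γ (u * Q ^ k) * Q ^ k with hg
  obtain ⟨Cu, hCu0, hCu⟩ := Wc_bound hQ u v α β γ u hαu hβu hγu
  have hsg : Summable g := by
    refine summable_of_norm_le_geom hQ (C := ‖u‖ * Cu) (fun n => ?_)
    rw [hg]
    simp only []
    rw [norm_mul, norm_mul, norm_pow]
    refine mul_le_mul_of_nonneg_right ?_ (pow_nonneg (norm_nonneg Q) n)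
    exact mul_le_mul_of_nonneg_left (hCu n) (norm_nonneg u)
  have hsg' : Summable (fun n => g (n + m)) := (summable_nat_add_iff m).2 hsg
  have hterm : ∀ n : ℕ, (v * Wc Q u v α β γ (v * Q ^ n)
      - u * Wc Q u v α β γ (u * Q ^ n)) * Q ^ n = g (n + m) - g n := by
    intro n
    rw [show v * Q ^ n = u * Q ^ (n + m) from by rw [hm]; ring]
    rw [hg]
    simp only []
    linear_combination (Wc Q u v α β γ (u * Q ^ (n + m)) * Q ^ n) * hm
  have hgz : ∀ i ∈ Finset.range m, g i = 0 := by
    intro i hi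
    rw [Finset.mem_range] at hi
    have hexp : i + 1 + (m - 1 - i) = m := by omega
    have hone : (Q * (u * Q ^ i) / v) * Q ^ (m - 1 - i) = 1 := by
      have e1 : (Q * (u * Q ^ i) / v) * Q ^ (m - 1 - i)
          = (u * Q ^ (i + 1 + (m - 1 - i))) / v := by ring
      rw [e1, hexp, ← hm, div_self hv]
    have hz : qPochInf (Q * (u * Q ^ i) / v) Q = 0 := eq_zero hQ hone
    rw [hg]
    simp only []
    rw [Wc, hz]
    simp
  have h1 : (∑' n : ℕ, (v * Wc Q u v α β γ (v * Q ^ n)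
      - u * Wc Q u v α β γ (u * Q ^ n)) * Q ^ n) = 0 := by
    rw [tsum_congr hterm, Summable.tsum_sub hsg' hsg]
    have h2 := Summable.sum_add_tsum_nat_add m hsg
    have h3 : (∑ i ∈ Finset.range m, g i) = 0 := Finset.sum_eq_zero hgz
    rw [← h2, h3, zero_add, sub_self]
  rw [Tc, h1, mul_zero]

lemma Tc_deg_B (hQ : ‖Q‖ < 1) {u v : ℂ} (hu : u ≠ 0) (hv : v ≠ 0) (α β γ : ℂ)
    (hαv : Fam Q (α * v)) (hβv : Fam Q (β * v)) (hγv : Fam Q (γ * v))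
    (m : ℕ) (hm : u = v * Q ^ m) :
    Tc Q u v α β γ = 0 := by
  classical
  set g : ℕ → ℂ := fun k => v * Wc Q u v α β γ (v * Q ^ k) * Q ^ k with hg
  obtain ⟨Cv, hCv0, hCv⟩ := Wc_bound hQ u v α β γ v hαv hβv hγv
  have hsg : Summable g := by
    refine summable_of_norm_le_geom hQ (C := ‖v‖ * Cv) (fun n => ?_)
    rw [hg]
    simp only []
    rw [norm_mul, norm_mul, norm_pow]
    refine mul_le_mul_of_nonneg_right ?_ (pow_nonneg (norm_nonneg Q) n)
    exact mul_le_mul_of_nonneg_left (hCv n) (norm_nonneg v)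
  have hsg' : Summable (fun n => g (n + m)) := (summable_nat_add_iff m).2 hsg
  have hterm : ∀ n : ℕ, (v * Wc Q u v α β γ (v * Q ^ n)
      - u * Wc Q u v α β γ (u * Q ^ n)) * Q ^ n = g n - g (n + m) := by
    intro n
    rw [show u * Q ^ n = v * Q ^ (n + m) from by rw [hm]; ring]
    rw [hg]
    simp only []
    linear_combination (-(Wc Q u v α β γ (v * Q ^ (n + m)) * Q ^ n)) * hm
  have hgz : ∀ i ∈ Finset.range m, g i = 0 := by
    intro i hi
    rw [Finset.mem_range] at hi
    have hexp : i + 1 + (m - 1 - i) = m := by omega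
    have hone : (Q * (v * Q ^ i) / u) * Q ^ (m - 1 - i) = 1 := by
      have e1 : (Q * (v * Q ^ i) / u) * Q ^ (m - 1 - i)
          = (v * Q ^ (i + 1 + (m - 1 - i))) / u := by ring
      rw [e1, hexp, ← hm, div_self hu]
    have hz : qPochInf (Q * (v * Q ^ i) / u) Q = 0 := eq_zero hQ hone
    rw [hg]
    simp only []
    rw [Wc, hz]
    simp
  have h1 : (∑' n : ℕ, (v * Wc Q u v α β γ (v * Q ^ n)
      - u * Wc Q u v α β γ (u * Q ^ n)) * Q ^ n) = 0 := by
    rw [tsum_congr hterm, Summable.tsum_sub hsg hsg']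
    have h2 := Summable.sum_add_tsum_nat_add m hsg
    have h3 : (∑ i ∈ Finset.range m, g i) = 0 := Finset.sum_eq_zero hgz
    rw [← h2, h3, zero_add, sub_self]
  rw [Tc, h1, mul_zero]

lemma Rc_deg_A (hQ : ‖Q‖ < 1) {u v : ℂ} (hv : v ≠ 0) (α β γ : ℂ)
    (m : ℕ) (hm : v = u * Q ^ m) :
    Rc Q u v α β γ = 0 := by
  have hQm : u * Q ^ m ≠ 0 := by rw [← hm]; exact hv
  have hu' : u ≠ 0 := (mul_ne_zero_iff.1 hQm).1
  have hQmne : Q ^ m ≠ 0 := (mul_ne_zero_iff.1 hQm).2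
  have hone : (u / v) * Q ^ m = 1 := by
    rw [hm]
    field_simp
  have hz : qPochInf (u / v) Q = 0 := eq_zero hQ hone
  rw [Rc, hz]
  simp

lemma Rc_deg_B (hQ : ‖Q‖ < 1) {u v : ℂ} (hu : u ≠ 0) (α β γ : ℂ)
    (m : ℕ) (hm1 : 1 ≤ m) (hm : u = v * Q ^ m) :
    Rc Q u v α β γ = 0 := by
  have hexp : 1 + (m - 1) = m := by omega
  have hone : (Q * v / u) * Q ^ (m - 1) = 1 := by
    have e1 : (Q * v / u) * Q ^ (m - 1) = (v * Q ^ (1 + (m - 1))) / u := by ring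
    rw [e1, hexp, ← hm, div_self hu]
  have hz : qPochInf (Q * v / u) Q = 0 := eq_zero hQ hone
  rw [Rc, hz]
  simp

/-! ### Nonvanishing of `Rc` with vanishing third parameter -/

lemma Rc_gamma0_ne (hQ : ‖Q‖ < 1) {u v : ℂ} (hv : v ≠ 0) (α β : ℂ)
    (h1 : qPochInf Q Q ≠ 0) (h2 : qPochInf (u / v) Q ≠ 0) (h3 : qPochInf (Q * v / u) Q ≠ 0)
    (h4 : qPochInf (α * β * u * v) Q ≠ 0)
    (h5 : qPochInf (α * u) Q ≠ 0) (h6 : qPochInf (β * u) Q ≠ 0)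
    (h7 : qPochInf (α * v) Q ≠ 0) (h8 : qPochInf (β * v) Q ≠ 0) :
    Rc Q u v α β 0 ≠ 0 := by
  have hQ1 : (1:ℂ) - Q ≠ 0 := by
    intro h
    have : Q = 1 := by linear_combination -h
    rw [this] at hQ
    simp at hQ
  rw [Rc_zero3]
  refine div_ne_zero ?_ ?_
  · refine mul_ne_zero (mul_ne_zero hQ1 hv) ?_
    refine mul_ne_zero (mul_ne_zero (mul_ne_zero (mul_ne_zero (mul_ne_zero h1 h2) h3) h4)
      one_ne_zero) one_ne_zero
  · exact mul_ne_zero (mul_ne_zero (mul_ne_zero (mul_ne_zero (mul_ne_zero h5 h6)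
      one_ne_zero) h7) h8) one_ne_zero

end AV

open AV in
/-- The Al-Salam–Verma `q`-integral formula, equivalent to Sears's identity for the
sum of two nonterminating balanced `₃φ₂` series. -/
theorem alsalam_verma_integral (q : ℝ) (hq0 : 0 < q) (hq1 : q < 1)
    (a b c u v : ℂ) (hu : u ≠ 0) (hv : v ≠ 0)
    (habs : max (max (max (‖a * u‖) (‖a * v‖))
          (max (‖b * u‖) (‖b * v‖)))
        (max (‖c * u‖) (‖c * v‖)) < 1)
    (hden : qPochInf (a * u) (q : ℂ) ≠ 0 ∧ qPochInf (b * u) (q : ℂ) ≠ 0 ∧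
        qPochInf (c * u) (q : ℂ) ≠ 0 ∧ qPochInf (a * v) (q : ℂ) ≠ 0 ∧
        qPochInf (b * v) (q : ℂ) ≠ 0 ∧ qPochInf (c * v) (q : ℂ) ≠ 0) :
    jacksonIntegral q u v (fun x =>
        qPochInf ((q : ℂ) * x / u) (q : ℂ) * qPochInf ((q : ℂ) * x / v) (q : ℂ) *
            qPochInf (a * b * c * u * v * x) (q : ℂ) /
          (qPochInf (a * x) (q : ℂ) * qPochInf (b * x) (q : ℂ) *
            qPochInf (c * x) (q : ℂ))) =
      (1 - (q : ℂ)) * v * (qPochInf (q : ℂ) (q : ℂ) * qPochInf (u / v) (q : ℂ) *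
          qPochInf ((q : ℂ) * v / u) (q : ℂ) * qPochInf (a * b * u * v) (q : ℂ) *
          qPochInf (a * c * u * v) (q : ℂ) * qPochInf (b * c * u * v) (q : ℂ)) /
        (qPochInf (a * u) (q : ℂ) * qPochInf (b * u) (q : ℂ) * qPochInf (c * u) (q : ℂ) *
          qPochInf (a * v) (q : ℂ) * qPochInf (b * v) (q : ℂ) *
          qPochInf (c * v) (q : ℂ)) := by
  classical
  have hQ : ‖(q : ℂ)‖ < 1 := by
    rw [Complex.norm_real, Real.norm_eq_abs, abs_of_pos hq0]
    exact hq1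
  set Q : ℂ := (q : ℂ) with hQdef
  obtain ⟨hdau, hdbu, hdcu, hdav, hdbv, hdcv⟩ := hden
  have fau : Fam Q (a * u) := Fam.of_pochInf_ne hQ hdau
  have fbu : Fam Q (b * u) := Fam.of_pochInf_ne hQ hdbu
  have fcu : Fam Q (c * u) := Fam.of_pochInf_ne hQ hdcu
  have fav : Fam Q (a * v) := Fam.of_pochInf_ne hQ hdav
  have fbv : Fam Q (b * v) := Fam.of_pochInf_ne hQ hdbv
  have fcv : Fam Q (c * v) := Fam.of_pochInf_ne hQ hdcv
  have hL : jacksonIntegral q u v (fun x =>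
        qPochInf (Q * x / u) Q * qPochInf (Q * x / v) Q *
            qPochInf (a * b * c * u * v * x) Q /
          (qPochInf (a * x) Q * qPochInf (b * x) Q * qPochInf (c * x) Q))
      = Tc Q u v a b c := by
    rw [jacksonIntegral, Tc, ← hQdef]
    congr 1
  rw [hL, show (1 - Q) * v * (qPochInf Q Q * qPochInf (u / v) Q * qPochInf (Q * v / u) Q *
      qPochInf (a * b * u * v) Q * qPochInf (a * c * u * v) Q * qPochInf (b * c * u * v) Q) /
      (qPochInf (a * u) Q * qPochInf (b * u) Q * qPochInf (c * u) Q * qPochInf (a * v) Q *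
        qPochInf (b * v) Q * qPochInf (c * v) Q) = Rc Q u v a b c from by rw [Rc]]
  by_cases hA : ∃ m : ℕ, v = u * Q ^ m
  · obtain ⟨m, hm⟩ := hA
    rw [Tc_deg_A hQ hu hv a b c fau fbu fcu m hm, Rc_deg_A hQ hv a b c m hm]
  by_cases hB : ∃ m : ℕ, u = v * Q ^ m
  · obtain ⟨m, hm⟩ := hB
    have hm1 : 1 ≤ m := by
      by_contra h
      push_neg at h
      interval_cases m
      · exact hA ⟨0, by rw [hm]; ring⟩
    rw [Tc_deg_B hQ hu hv a b c fav fbv fcv m hm, Rc_deg_B hQ hu a b c m hm1 hm]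
  -- generic case
  push_neg at hA hB
  have fQ : Fam Q Q := Fam.of_norm_lt_one hQ hQ
  have hQ1 : (1 : ℂ) - Q ≠ 0 := by
    intro h
    have : Q = 1 := by linear_combination -h
    rw [this] at hQ
    simp at hQ
  have fuv : Fam Q (u / v) := by
    intro j h
    field_simp at h
    exact hA j h.symm
  have fvu : Fam Q (v / u) := by
    intro j h
    field_simp at h
    exact hB j h.symm
  have fQuv : Fam Q (Q * u / v) := by
    intro j h
    field_simp at h
    refine hA (j + 1) ?_
    rw [← h]
    ring
  have fQvu : Fam Q (Q * v / u) := by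
    intro j h
    field_simp at h
    refine hB (j + 1) ?_
    rw [← h]
    ring
  -- moduli families
  simp only [max_lt_iff] at habs
  have nau : ‖a * u‖ < 1 := by exact habs.1.1.1
  have nav : ‖a * v‖ < 1 := by exact habs.1.1.2
  have nbu : ‖b * u‖ < 1 := by exact habs.1.2.1
  have nbv : ‖b * v‖ < 1 := by exact habs.1.2.2
  have ncu : ‖c * u‖ < 1 := by exact habs.2.1
  have ncv : ‖c * v‖ < 1 := by exact habs.2.2
  have prodlt : ∀ {x y : ℂ}, ‖x‖ < 1 → ‖y‖ < 1 → ‖x * y‖ < 1 := by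
    intro x y hx hy
    rw [norm_mul]
    nlinarith [norm_nonneg x, norm_nonneg y]
  have fab : Fam Q (a * b * u * v) := Fam.of_norm_lt_one hQ (by
    rw [show a * b * u * v = (a * u) * (b * v) from by ring]
    exact prodlt nau nbv)
  have f0 : ∀ w : ℂ, Fam Q (0 * w) := fun w => Fam.zero.congr (by ring)
  have f00uv : Fam Q (0 * 0 * u * v) := Fam.zero.congr (by ring)
  have fa0uv : Fam Q (a * 0 * u * v) := Fam.zero.congr (by ring)
  -- the four stages
  have sA := stage hQ hu hv a b c fau fav fbu fbv fcu fcv fab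
  have sB := stage hQ hu hv a 0 b fau fav (f0 u) (f0 v) fbu fbv fa0uv
  have sC := stage hQ hu hv 0 0 a (f0 u) (f0 v) (f0 u) (f0 v) fau fav f00uv
  have sD := stage hQ hu hv 0 0 (Q / v) (f0 u) (f0 v) (f0 u) (f0 v)
    (fQuv.congr (by ring)) (fQ.congr (div_mul_cancel₀ Q hv).symm) f00uv
  have hED := eval_special hQ hu hv fQuv
  -- nonvanishing of the P's we must cancel
  have PQne : qPochInf Q Q ≠ 0 := fQ.pochInf_ne0 hQ
  have Puvne : qPochInf (u / v) Q ≠ 0 := fuv.pochInf_ne0 hQ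
  have PQvune : qPochInf (Q * v / u) Q ≠ 0 := fQvu.pochInf_ne0 hQ
  have PQuvne : qPochInf (Q * u / v) Q ≠ 0 := fQuv.pochInf_ne0 hQ
  have pzero : ∀ w : ℂ, qPochInf (0 * w) Q = 1 := fun w => by
    rw [show (0:ℂ) * w = 0 from by ring, qPochInf_zero]
  -- value of Rc at the special point
  have hRD : Rc Q u v 0 0 (Q / v)
      = (1 - Q) * (v * ((1 - u / v) * qPochInf (Q * v / u) Q)) := by
    rw [Rc]
    rw [show (0:ℂ) * 0 * u * v = 0 from by ring,
      show (0:ℂ) * (Q / v) * u * v = 0 from by ring, qPochInf_zero,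
      show (0:ℂ) * u = 0 from by ring, show (0:ℂ) * v = 0 from by ring, qPochInf_zero,
      show (Q / v) * u = Q * u / v from by ring,
      show (Q / v) * v = Q from div_mul_cancel₀ Q hv]
    rw [peel hQ (u / v), show (u / v) * Q = Q * u / v from by ring]
    field_simp
  -- T(0,0,0) = R(0,0,0)
  have hvu : v - u ≠ 0 := by
    intro h
    refine hA 0 ?_
    rw [pow_zero, mul_one]
    linear_combination h
  have hfac : (1 - Q) * ((v - u) * qPochInf (Q * v / u) Q) ≠ 0 :=
    mul_ne_zero hQ1 (mul_ne_zero hvu PQvune)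
  have hpeelvu : qPochInf (v / u) Q = (1 - v / u) * qPochInf (Q * v / u) Q := by
    rw [peel hQ (v / u), show (v / u) * Q = Q * v / u from by ring]
  have hT000 : Tc Q u v 0 0 0 = Rc Q u v 0 0 0 := by
    rw [hED, hRD, hpeelvu] at sD
    refine mul_right_cancel₀ hfac ?_
    have e1 : u * (v / u) = v := mul_div_cancel₀ v hu
    have e2 : v * (u / v) = u := mul_div_cancel₀ u hv
    linear_combination (-1 : ℂ) * sD
      + ((1 - Q) * qPochInf (Q * v / u) Q * Tc Q u v 0 0 0) * e2
      + ((1 - Q) * qPochInf (Q * v / u) Q * Rc Q u v 0 0 0) * e1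
  -- peel the chain back up
  have R000ne : Rc Q u v 0 0 0 ≠ 0 := by
    refine Rc_gamma0_ne hQ hv 0 0 PQne Puvne PQvune ?_ ?_ ?_ ?_ ?_
    · rw [show (0:ℂ) * 0 * u * v = 0 from by ring, qPochInf_zero]; exact one_ne_zero
    · exact (pzero u) ▸ one_ne_zero
    · exact (pzero u) ▸ one_ne_zero
    · exact (pzero v) ▸ one_ne_zero
    · exact (pzero v) ▸ one_ne_zero
  have hC : Tc Q u v 0 0 a = Rc Q u v 0 0 a := by
    rw [hT000] at sC
    refine mul_right_cancel₀ R000ne ?_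
    linear_combination sC
  have hA00 : Tc Q u v a 0 0 = Rc Q u v a 0 0 := by
    rw [Tc_sym2, Rc_sym2]
    exact hC
  have Ra00ne : Rc Q u v a 0 0 ≠ 0 := by
    refine Rc_gamma0_ne hQ hv a 0 PQne Puvne PQvune ?_ hdau ?_ hdav ?_
    · rw [show a * 0 * u * v = 0 from by ring, qPochInf_zero]; exact one_ne_zero
    · exact (pzero u) ▸ one_ne_zero
    · exact (pzero v) ▸ one_ne_zero
  have hB2 : Tc Q u v a 0 b = Rc Q u v a 0 b := by
    rw [hA00] at sB
    refine mul_right_cancel₀ Ra00ne ?_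
    linear_combination sB
  have hab0 : Tc Q u v a b 0 = Rc Q u v a b 0 := by
    rw [Tc_sym1, Rc_sym1]
    exact hB2
  have Rab0ne : Rc Q u v a b 0 ≠ 0 := by
    refine Rc_gamma0_ne hQ hv a b PQne Puvne PQvune (fab.pochInf_ne0 hQ) hdau hdbu hdav hdbv
  rw [hab0] at sA
  refine mul_right_cancel₀ Rab0ne ?_
  linear_combination sA
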